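/- Kernel bounds on low and medium frequencies (Proposition 3.3, part 1). Let b̃ ∈ ℝⁿ be a fixed nonzero constant vector and define λ±, Ĝ, K̂₁, K̂₂ as usual. Set S₁ = {k ∈ ℤⁿ\{0} : |k|⁴ − 4(b̃·k)² ≤ 0} and S₂ = {k ∈ ℤⁿ\{0} : 0 < |k|⁴ − 4(b̃·k)² ≤ |k|⁴/4}. Then there exists a constant C > 0 (depending only on |b̃|) such that for all k ∈ S₁ ∪ S₂ and all t ≥ 0: |K̂₁(k,t)| ≤ C e^{−|k|²t/8} and |K̂₂(k,t)| ≤ C e^{−|k|²t/8}. -/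

import Mathlib

open scoped BigOperators
open MeasureTheory

noncomputable section

namespace MHD

/-- The frequency lattice `ℤⁿ` of the torus `𝕋ⁿ = (ℝ/2πℤ)ⁿ`. -/
abbrev Freq (n : ℕ) := Fin n → ℤ

/-- Fourier coefficients of a (vector) field on `𝕋ⁿ`: a field is identified with the
family of its Fourier coefficients `f̂(k) ∈ ℂⁿ`, `k ∈ ℤⁿ`. -/
abbrev Coef (n : ℕ) := Freq n → Fin n → ℂ

/-- `|k|²`. -/
def k2 {n : ℕ} (k : Freq n) : ℝ := ∑ i, ((k i : ℝ)) ^ 2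

/-- `|k|`. -/
def knorm {n : ℕ} (k : Freq n) : ℝ := Real.sqrt (k2 k)

/-- `b̃·k`. -/
def bdot {n : ℕ} (b : Fin n → ℝ) (k : Freq n) : ℝ := ∑ i, b i * (k i : ℝ)

/-- `|b̃|`, the Euclidean norm of a constant vector. -/
def vnormR {n : ℕ} (b : Fin n → ℝ) : ℝ := Real.sqrt (∑ i, (b i) ^ 2)

/-- Squared length of a coefficient vector: `|f̂(k)|²`. -/
def vnormSq {n : ℕ} (v : Fin n → ℂ) : ℝ := ∑ i, ‖v i‖ ^ 2

/-- The Diophantine condition: `|b̃·k| ≥ c|k|^{-r}` for all `k ∈ ℤⁿ \ {0}`. -/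
def Diophantine {n : ℕ} (b : Fin n → ℝ) (r c : ℝ) : Prop :=
  ∀ k : Freq n, k ≠ 0 → c / (knorm k) ^ r ≤ |bdot b k|

/-- Squared Sobolev norm `‖f‖_{H^s}² = Σ_k (1+|k|²)^s |f̂(k)|²`. -/
def sobSq {n : ℕ} (s : ℝ) (f : Coef n) : ℝ :=
  ∑' k : Freq n, (1 + k2 k) ^ s * vnormSq (f k)

/-- Sobolev norm `‖f‖_{H^s}`. -/
def sobNorm {n : ℕ} (s : ℝ) (f : Coef n) : ℝ := Real.sqrt (sobSq s f)

/-- Squared Sobolev norm of a pair `‖(f,g)‖_{H^s}²`. -/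
def pairSobSq {n : ℕ} (s : ℝ) (f g : Coef n) : ℝ := sobSq s f + sobSq s g

/-- Sobolev norm of a pair `‖(f,g)‖_{H^s}`. -/
def pairNorm {n : ℕ} (s : ℝ) (f g : Coef n) : ℝ := Real.sqrt (pairSobSq s f g)

/-- Membership in `H^s(𝕋ⁿ)`. -/
def MemSob {n : ℕ} (s : ℝ) (f : Coef n) : Prop :=
  Summable fun k : Freq n => (1 + k2 k) ^ s * vnormSq (f k)

/-- Divergence-free: `k·f̂(k) = 0` for every `k`. -/
def DivFree {n : ℕ} (f : Coef n) : Prop :=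
  ∀ k : Freq n, (∑ i, (k i : ℂ) * f k i) = 0

/-- Fourier coefficients of the transport term `u·∇v`:
`(u·∇v)^(k) = Σ_j i (û(j)·(k-j)) v̂(k-j)`. -/
def transport {n : ℕ} (u v : Coef n) (k : Freq n) (i : Fin n) : ℂ :=
  ∑' j : Freq n, (Complex.I * ∑ l, u j l * (((k - j) l : ℤ) : ℂ)) * v (k - j) i

/-- The Helmholtz–Leray projection `P` in Fourier variables. -/
def leray {n : ℕ} (f : Coef n) (k : Freq n) (i : Fin n) : ℂ :=
  if k = 0 then f k i
  else f k i - ((∑ l, (k l : ℂ) * f k l) / (k2 k : ℂ)) * (k i : ℂ)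

/-- Fourier coefficients of `b̃·∇f`. -/
def bgrad {n : ℕ} (b : Fin n → ℝ) (f : Coef n) (k : Freq n) (i : Fin n) : ℂ :=
  Complex.I * (bdot b k : ℂ) * f k i

/-- The Fourier multiplier `Λ^s = (-Δ)^{s/2}` (acting trivially on the zero mode when `s < 0`). -/
def lam {n : ℕ} (s : ℝ) (f : Coef n) (k : Freq n) (i : Fin n) : ℂ :=
  ((knorm k ^ s : ℝ) : ℂ) * f k i

/-- Squared `L²` norm (with normalized measure), `‖f‖_{L²}² = Σ_k |f̂(k)|²`. -/
def l2Sq {n : ℕ} (f : Coef n) : ℝ := ∑' k : Freq n, vnormSq (f k)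

/-- Squared `L²` norm of `Λ^s f`: `‖Λ^s f‖_{L²}² = Σ_k |k|^{2s}|f̂(k)|²`. -/
def lamSq {n : ℕ} (s : ℝ) (f : Coef n) : ℝ := ∑' k : Freq n, (k2 k) ^ s * vnormSq (f k)

/-- The (normalized) `L²` inner product `∫_{𝕋ⁿ} f·g dx` of two real fields, via Plancherel. -/
def l2inner {n : ℕ} (f g : Coef n) : ℝ :=
  (∑' k : Freq n, ∑ i, f k i * starRingEnd ℂ (g k i)).re

/-- `‖∇f‖_{H^s}² = Σ_k (1+|k|²)^s |k|² |f̂(k)|²`. -/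
def gradSobSq {n : ℕ} (s : ℝ) (f : Coef n) : ℝ :=
  ∑' k : Freq n, (1 + k2 k) ^ s * k2 k * vnormSq (f k)

/-- `‖∇f‖_{L^∞}`: the sup over `x ∈ 𝕋ⁿ` of the (Frobenius) norm of the gradient matrix of the
field with Fourier coefficients `f`. -/
def gradLinfty {n : ℕ} (f : Coef n) : ℝ :=
  ⨆ x : Fin n → ℝ,
    Real.sqrt (∑ i, ∑ j,
      ‖∑' k : Freq n,
          Complex.exp (Complex.I * ((∑ l, (k l : ℝ) * x l : ℝ) : ℂ)) *
            (Complex.I * (k j : ℂ) * f k i)‖ ^ 2)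

/-- `‖f‖_{L^∞}`. -/
def linfty {n : ℕ} (f : Coef n) : ℝ :=
  ⨆ x : Fin n → ℝ,
    Real.sqrt (∑ i,
      ‖∑' k : Freq n,
          Complex.exp (Complex.I * ((∑ l, (k l : ℝ) * x l : ℝ) : ℂ)) * f k i‖ ^ 2)

/-- Smoothness in space (rapid decay of the Fourier coefficients at every time). -/
def Smooth {n : ℕ} (u : ℝ → Coef n) : Prop :=
  ∀ t : ℝ, ∀ N : ℕ, Summable fun k : Freq n => (1 + k2 k) ^ (N : ℝ) * vnormSq (u t k)

/-- The perturbed incompressible MHD system on `𝕋ⁿ`,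
`∂ₜu − μΔu + u·∇u + ∇p = b̃·∇b + b·∇b`,
`∂ₜb − νΔb + u·∇b = b̃·∇u + b·∇u`, `∇·u = ∇·b = 0`,
written mode-by-mode in Fourier variables. -/
structure IsMHDSolution {n : ℕ} (btil : Fin n → ℝ) (μ ν : ℝ)
    (u b : ℝ → Coef n) (p : ℝ → Freq n → ℂ) : Prop where
  du : ∀ (t : ℝ) (k : Freq n) (i : Fin n),
      HasDerivAt (fun τ : ℝ => u τ k i)
        (-(μ : ℂ) * (k2 k : ℂ) * u t k i - transport (u t) (u t) k i
          - Complex.I * (k i : ℂ) * p t k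
          + Complex.I * (bdot btil k : ℂ) * b t k i
          + transport (b t) (b t) k i) t
  db : ∀ (t : ℝ) (k : Freq n) (i : Fin n),
      HasDerivAt (fun τ : ℝ => b τ k i)
        (-(ν : ℂ) * (k2 k : ℂ) * b t k i - transport (u t) (b t) k i
          + Complex.I * (bdot btil k : ℂ) * u t k i
          + transport (b t) (u t) k i) t
  divu : ∀ t : ℝ, DivFree (u t)
  divb : ∀ t : ℝ, DivFree (b t)

/-- `|k|⁴ − 4(b̃·k)²`, the discriminant of `λ² − |k|²λ + (b̃·k)² = 0`. -/
def disc {n : ℕ} (b : Fin n → ℝ) (k : Freq n) : ℝ := (k2 k) ^ 2 - 4 * (bdot b k) ^ 2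

/-- The (complex) square root `√(|k|⁴ − 4(b̃·k)²)`. -/
def sqrtDisc {n : ℕ} (b : Fin n → ℝ) (k : Freq n) : ℂ :=
  if 0 ≤ disc b k then ((Real.sqrt (disc b k) : ℝ) : ℂ)
  else Complex.I * ((Real.sqrt (-disc b k) : ℝ) : ℂ)

/-- `λ₊(k)`. -/
def lamP {n : ℕ} (b : Fin n → ℝ) (k : Freq n) : ℂ := ((k2 k : ℂ) + sqrtDisc b k) / 2

/-- `λ₋(k)`. -/
def lamM {n : ℕ} (b : Fin n → ℝ) (k : Freq n) : ℂ := ((k2 k : ℂ) - sqrtDisc b k) / 2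

/-- The multiplier `Ĝ(k,t) = (e^{−λ₋t} − e^{−λ₊t})/(λ₊ − λ₋)`, interpreted as
`t e^{−λ₊t}` when `λ₊ = λ₋`. -/
def Ghat {n : ℕ} (b : Fin n → ℝ) (k : Freq n) (t : ℝ) : ℂ :=
  if lamP b k = lamM b k then (t : ℂ) * Complex.exp (-lamP b k * t)
  else (Complex.exp (-lamM b k * t) - Complex.exp (-lamP b k * t)) / (lamP b k - lamM b k)

/-- `|K̂₁(k,t)| = |Ĝ(k,t)| √(|λ₊|² + (b̃·k)²)`. -/
def K1abs {n : ℕ} (b : Fin n → ℝ) (k : Freq n) (t : ℝ) : ℝ :=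
  ‖Ghat b k t‖ * Real.sqrt (‖lamP b k‖ ^ 2 + (bdot b k) ^ 2)

/-- `|K̂₂(k,t)| = |K̂₁(k,t)| |b̃·k|/|λ₊|`. -/
def K2abs {n : ℕ} (b : Fin n → ℝ) (k : Freq n) (t : ℝ) : ℝ :=
  K1abs b k t * |bdot b k| / ‖lamP b k‖

/-- `|K̂₃(k,t)| = |e^{−λ₊t}|`. -/
def K3abs {n : ℕ} (b : Fin n → ℝ) (k : Freq n) (t : ℝ) : ℝ :=
  ‖Complex.exp (-lamP b k * t)‖

end MHD


/-!
On `S₁ ∪ S₂`, which is just `{|k|⁴ − 4(b̃·k)² ≤ |k|⁴/4}`, the square root of the discriminant has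
real part at most `|k|²/2`, so both roots `λ±` have real part at least `|k|²/4`. The mean value
theorem for `exp` on the half-plane `{Re z ≤ −|k|²t/4}` then gives `|Ĝ(k,t)| ≤ t e^{−|k|²t/4}`,
also in the degenerate case `λ₊ = λ₋`. The factor `√(|λ₊|² + (b̃·k)²)` is at most
`|k|² + 2|b̃·k| ≤ (1 + 2|b̃|)|k|²`, and `|k|²t e^{−|k|²t/8} ≤ 8` absorbs the extra `|k|² t`.
Finally `|K̂₂| ≤ |K̂₁|`, because `λ₊λ₋ = (b̃·k)²` and `|λ₋| ≤ |λ₊|`.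
-/

theorem Complex.norm_exp_sub_exp_le {a b : ℂ} {M : ℝ} (ha : a.re ≤ M) (hb : b.re ≤ M) :
    ‖Complex.exp a - Complex.exp b‖ ≤ Real.exp M * ‖a - b‖ :=
  (convex_halfSpace_re_le M).norm_image_sub_le_of_norm_hasDerivWithin_le
    (fun z _ => (Complex.hasDerivAt_exp z).hasDerivWithinAt)
    (fun z hz => by rw [Complex.norm_exp]; exact Real.exp_le_exp.mpr hz) hb ha

theorem Real.mul_exp_neg_div_le {x c : ℝ} (hc : 0 < c) : x * Real.exp (-x / c) ≤ c := by
  have hexp : x / c + 1 ≤ Real.exp (x / c) := Real.add_one_le_exp _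
  rw [neg_div, Real.exp_neg, ← div_eq_mul_inv, div_le_iff₀ (Real.exp_pos _)]
  have hx : x = c * (x / c) := by field_simp
  nlinarith

namespace MHD

variable {n : ℕ} (b : Fin n → ℝ) (k : Freq n)

theorem k2_nonneg : 0 ≤ k2 k :=
  Finset.sum_nonneg fun _ _ => sq_nonneg _

theorem one_le_k2 {k : Freq n} (hk : k ≠ 0) : 1 ≤ k2 k := by
  obtain ⟨i, hi⟩ := Function.ne_iff.mp hk
  have hki : (1 : ℝ) ≤ (k i : ℝ) ^ 2 := by
    rw [← Int.cast_pow, ← Int.cast_one, Int.cast_le]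
    exact Int.one_le_abs hi |>.trans (Int.le_self_sq _) |>.trans_eq (sq_abs _)
  exact hki.trans (Finset.single_le_sum (fun j _ => sq_nonneg (k j : ℝ)) (Finset.mem_univ i))

theorem abs_bdot_le_vnormR_mul_knorm : |bdot b k| ≤ vnormR b * knorm k := by
  rw [vnormR, knorm, k2, ← Real.sqrt_mul (Finset.sum_nonneg fun _ _ => sq_nonneg _)]
  exact Real.abs_le_sqrt (Finset.sum_mul_sq_le_sq_mul_sq _ _ _)

theorem abs_bdot_le_vnormR_mul_k2 {k : Freq n} (hk : k ≠ 0) : |bdot b k| ≤ vnormR b * k2 k :=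
  (abs_bdot_le_vnormR_mul_knorm b k).trans <| mul_le_mul_of_nonneg_left
    (Real.sqrt_le_self_iff.mpr (Or.inr (one_le_k2 hk))) (Real.sqrt_nonneg _)

theorem sqrtDisc_sq : sqrtDisc b k ^ 2 = disc b k := by
  unfold sqrtDisc
  split_ifs with h
  · rw [← Complex.ofReal_pow, Real.sq_sqrt h]
  · rw [mul_pow, Complex.I_sq, ← Complex.ofReal_pow, Real.sq_sqrt (by linarith)]
    push_cast
    ring

theorem re_sqrtDisc_nonneg : 0 ≤ (sqrtDisc b k).re := by
  unfold sqrtDisc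
  split_ifs <;> simp [Real.sqrt_nonneg]

theorem re_sqrtDisc_le {b : Fin n → ℝ} {k : Freq n} (h : disc b k ≤ k2 k ^ 2 / 4) :
    (sqrtDisc b k).re ≤ k2 k / 2 := by
  unfold sqrtDisc
  split_ifs
  · rw [Complex.ofReal_re, Real.sqrt_le_left (by linarith [k2_nonneg k])]
    linarith
  · simpa using div_nonneg (k2_nonneg k) zero_le_two

theorem lamP_mul_lamM : lamP b k * lamM b k = bdot b k ^ 2 := by
  have hs := sqrtDisc_sq b k
  unfold lamP lamM
  unfold disc at hs
  push_cast at hs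
  linear_combination -hs / 4

theorem norm_lamM_le_norm_lamP : ‖lamM b k‖ ≤ ‖lamP b k‖ := by
  have hs := re_sqrtDisc_nonneg b k
  have ha := k2_nonneg k
  rw [← sq_le_sq₀ (norm_nonneg _) (norm_nonneg _), Complex.sq_norm, Complex.sq_norm,
    Complex.normSq_apply, Complex.normSq_apply]
  simp only [lamP, lamM, Complex.div_ofNat_re, Complex.div_ofNat_im, Complex.add_re,
    Complex.add_im, Complex.sub_re, Complex.sub_im, Complex.ofReal_re, Complex.ofReal_im]
  nlinarith

theorem abs_bdot_le_norm_lamP : |bdot b k| ≤ ‖lamP b k‖ := by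
  rw [← sq_le_sq₀ (abs_nonneg _) (norm_nonneg _), sq_abs]
  calc bdot b k ^ 2 = ‖lamP b k * lamM b k‖ := by
        rw [lamP_mul_lamM, ← Complex.ofReal_pow, Complex.norm_real, Real.norm_eq_abs,
          abs_of_nonneg (sq_nonneg _)]
    _ ≤ ‖lamP b k‖ ^ 2 := by
        rw [norm_mul, sq]
        exact mul_le_mul_of_nonneg_left (norm_lamM_le_norm_lamP b k) (norm_nonneg _)

theorem norm_lamP_le : ‖lamP b k‖ ≤ k2 k + |bdot b k| := by
  have hs : ‖sqrtDisc b k‖ ≤ k2 k + 2 * |bdot b k| := by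
    rw [← sq_le_sq₀ (norm_nonneg _) (by positivity [k2_nonneg k]), ← norm_pow, sqrtDisc_sq,
      Complex.norm_real, Real.norm_eq_abs, disc, abs_le]
    constructor <;> nlinarith [k2_nonneg k, abs_nonneg (bdot b k), sq_abs (bdot b k)]
  calc ‖lamP b k‖ ≤ (‖(k2 k : ℂ)‖ + ‖sqrtDisc b k‖) / 2 := by
        rw [lamP, norm_div, Complex.norm_ofNat]
        gcongr
        exact norm_add_le _ _
    _ ≤ k2 k + |bdot b k| := by
        rw [Complex.norm_real, Real.norm_of_nonneg (k2_nonneg k)]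
        linarith [k2_nonneg k]

theorem half_k2_le_re_lamP : k2 k / 2 ≤ (lamP b k).re := by
  have := re_sqrtDisc_nonneg b k
  simp only [lamP, Complex.div_ofNat_re, Complex.add_re, Complex.ofReal_re]
  linarith

theorem quarter_k2_le_re_lamM {b : Fin n → ℝ} {k : Freq n} (h : disc b k ≤ k2 k ^ 2 / 4) :
    k2 k / 4 ≤ (lamM b k).re := by
  have := re_sqrtDisc_le h
  simp only [lamM, Complex.div_ofNat_re, Complex.sub_re, Complex.ofReal_re]
  linarith

theorem norm_Ghat_le {t m : ℝ} (ht : 0 ≤ t) (hM : m ≤ (lamM b k).re) (hP : m ≤ (lamP b k).re) :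
    ‖Ghat b k t‖ ≤ t * Real.exp (-m * t) := by
  have hre : ∀ z : ℂ, m ≤ z.re → (-z * t).re ≤ -m * t := fun z hz => by
    simp only [neg_mul, Complex.neg_re, Complex.re_mul_ofReal]
    nlinarith
  unfold Ghat
  split_ifs with h
  · rw [norm_mul, Complex.norm_real, Real.norm_of_nonneg ht, Complex.norm_exp]
    exact mul_le_mul_of_nonneg_left (Real.exp_le_exp.mpr (hre _ hP)) ht
  · rw [norm_div, div_le_iff₀ (norm_pos_iff.mpr (sub_ne_zero.mpr h))]
    calc _ ≤ Real.exp (-m * t) * ‖-lamM b k * t - -lamP b k * t‖ :=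
          Complex.norm_exp_sub_exp_le (hre _ hM) (hre _ hP)
      _ = t * Real.exp (-m * t) * ‖lamP b k - lamM b k‖ := by
          rw [show -lamM b k * t - -lamP b k * t = (lamP b k - lamM b k) * t by ring, norm_mul,
            Complex.norm_real, Real.norm_of_nonneg ht]
          ring

theorem K1abs_le {b : Fin n → ℝ} {k : Freq n} {t : ℝ} (ht : 0 ≤ t)
    (h : disc b k ≤ k2 k ^ 2 / 4) :
    K1abs b k t ≤ (k2 k + 2 * |bdot b k|) * (t * Real.exp (-(k2 k / 4) * t)) := by
  have hG := norm_Ghat_le b k ht (quarter_k2_le_re_lamM h)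
    ((half_k2_le_re_lamP b k).trans' (by linarith [k2_nonneg k]))
  have hfactor : √(‖lamP b k‖ ^ 2 + bdot b k ^ 2) ≤ k2 k + 2 * |bdot b k| := by
    rw [Real.sqrt_le_left (by positivity [k2_nonneg k])]
    nlinarith [norm_lamP_le b k, norm_nonneg (lamP b k), abs_nonneg (bdot b k),
      sq_abs (bdot b k)]
  rw [K1abs, mul_comm]
  exact mul_le_mul hfactor hG (norm_nonneg _) (by positivity [k2_nonneg k])

theorem K2abs_le_K1abs (t : ℝ) : K2abs b k t ≤ K1abs b k t := by
  rw [K2abs, mul_div_assoc]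
  exact mul_le_of_le_one_right (by unfold K1abs; positivity)
    (div_le_one_of_le₀ (abs_bdot_le_norm_lamP b k) (norm_nonneg _))

end MHD

open MHD in
theorem kernel_bounds_low_medium_general
    (n : ℕ) (btil : Fin n → ℝ) :
    ∃ C > 0, ∀ k : Freq n, k ≠ 0 →
      (disc btil k ≤ 0 ∨ (0 < disc btil k ∧ disc btil k ≤ (k2 k) ^ 2 / 4)) →
      ∀ t : ℝ, 0 ≤ t →
        K1abs btil k t ≤ C * Real.exp (-(k2 k) * t / 8) ∧
        K2abs btil k t ≤ C * Real.exp (-(k2 k) * t / 8) := by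
  have hB : 0 ≤ vnormR btil := Real.sqrt_nonneg _
  refine ⟨8 * (1 + 2 * vnormR btil), by positivity, fun k hk hdisc t ht => ?_⟩
  have hS : disc btil k ≤ k2 k ^ 2 / 4 := by
    rcases hdisc with h | ⟨-, h⟩
    · exact h.trans (by positivity)
    · exact h
  have ha := k2_nonneg k
  have hK1 : K1abs btil k t ≤ 8 * (1 + 2 * vnormR btil) * Real.exp (-(k2 k) * t / 8) :=
    calc K1abs btil k t ≤ (k2 k + 2 * |bdot btil k|) * (t * Real.exp (-(k2 k / 4) * t)) :=
          K1abs_le ht hS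
      _ ≤ (1 + 2 * vnormR btil) * k2 k * (t * Real.exp (-(k2 k / 4) * t)) := by
          gcongr
          linarith [abs_bdot_le_vnormR_mul_k2 btil hk]
      _ = (1 + 2 * vnormR btil) * (k2 k * t * Real.exp (-(k2 k * t) / 8))
            * Real.exp (-(k2 k) * t / 8) := by
          have hsplit : Real.exp (-(k2 k / 4) * t)
              = Real.exp (-(k2 k * t) / 8) * Real.exp (-(k2 k) * t / 8) := by
            rw [← Real.exp_add]
            ring_nf
          rw [hsplit]
          ring
      _ ≤ (1 + 2 * vnormR btil) * 8 * Real.exp (-(k2 k) * t / 8) := by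
          gcongr
          exact Real.mul_exp_neg_div_le (by norm_num)
      _ = 8 * (1 + 2 * vnormR btil) * Real.exp (-(k2 k) * t / 8) := by ring
  exact ⟨hK1, (K2abs_le_K1abs btil k t).trans hK1⟩

open MHD in
/-- **Kernel bounds on low and medium frequencies** (Proposition 3.3, part 1): on
`S₁ = {|k|⁴ − 4(b̃·k)² ≤ 0}` and `S₂ = {0 < |k|⁴ − 4(b̃·k)² ≤ |k|⁴/4}` the kernels `K̂₁, K̂₂`
decay like `e^{−|k|²t/8}`. -/
theorem kernel_bounds_low_medium
    (n : ℕ) (btil : Fin n → ℝ) (hb : btil ≠ 0) :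
    ∃ C > 0, ∀ k : Freq n, k ≠ 0 →
      (disc btil k ≤ 0 ∨ (0 < disc btil k ∧ disc btil k ≤ (k2 k) ^ 2 / 4)) →
      ∀ t : ℝ, 0 ≤ t →
        K1abs btil k t ≤ C * Real.exp (-(k2 k) * t / 8) ∧
        K2abs btil k t ≤ C * Real.exp (-(k2 k) * t / 8) :=
  kernel_bounds_low_medium_general n btil
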